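/- Let r(n) = √(n+1) · arcsin(1/√(n+1)) − √n · arcsin(1/√n). Then r(n) ~ −(1/6) n^{-2} as n → ∞, i.e. n² r(n) → −1/6. -/

import Mathlib

/-!
By the mean value theorem, `n ^ 2 * r n = n ^ 2 * F' cₙ` for some `cₙ ∈ (n, n + 1)`, where
`F x = √x * arcsin (1 / √x)`, and `n / cₙ → 1`; so it suffices that `x ^ 2 * F' x → -1/6`.
With `y = 1 / √x` one has `x ^ 2 * F' x = (arcsin y - y / √(1 - y ^ 2)) / (2 * y ^ 3)`, and
L'Hôpital's rule (the numerator has derivative `-y ^ 2 / (1 - y ^ 2) ^ (3/2)`) gives the limit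
`-1/3` of `(arcsin y - y / √(1 - y ^ 2)) / y ^ 3` as `y → 0⁺`.
-/

open Filter Real Set Topology

theorem tendsto_pow_mul_sub_of_tendsto_pow_mul_deriv {F F' : ℝ → ℝ} {a L : ℝ} (k : ℕ)
    (hF : ∀ x, a < x → HasDerivAt F (F' x) x)
    (hL : Tendsto (fun x => x ^ k * F' x) atTop (𝓝 L)) :
    Tendsto (fun n : ℕ => (n : ℝ) ^ k * (F (n + 1) - F n)) atTop (𝓝 L) := by
  have hmvt : ∀ n : ℕ, ∃ c, (n : ℝ) ≤ c ∧ c ≤ n + 1 ∧ (a < n → F (n + 1) - F n = F' c) := by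
    intro n
    by_cases han : a < n
    · obtain ⟨c, hc, hslope⟩ := exists_hasDerivAt_eq_slope F F' (lt_add_one (n : ℝ))
        (fun x hx => (hF x (han.trans_le hx.1)).continuousAt.continuousWithinAt)
        (fun x hx => hF x (han.trans hx.1))
      exact ⟨c, hc.1.le, hc.2.le, fun _ => by rw [hslope, add_sub_cancel_left, div_one]⟩
    · exact ⟨n, le_rfl, by linarith, fun h => absurd h han⟩
  choose c hnc hcn hc using hmvt
  have hc_pos : ∀ᶠ n : ℕ in atTop, 0 < c n := by
    filter_upwards [eventually_gt_atTop 0] with n hn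
    exact (Nat.cast_pos.mpr hn).trans_le (hnc n)
  have hratio : Tendsto (fun n : ℕ => (n : ℝ) / c n) atTop (𝓝 1) := by
    refine tendsto_of_tendsto_of_tendsto_of_le_of_le' (tendsto_natCast_div_add_atTop 1)
      tendsto_const_nhds ?_ ?_
    · filter_upwards [hc_pos] with n hn
      exact div_le_div_of_nonneg_left n.cast_nonneg hn (hcn n)
    · filter_upwards [hc_pos] with n hn
      exact (div_le_one hn).mpr (hnc n)
  have hlim := (hratio.pow k).mul
    (hL.comp (tendsto_atTop_mono hnc tendsto_natCast_atTop_atTop))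
  rw [one_pow, one_mul] at hlim
  refine hlim.congr' ?_
  filter_upwards [hc_pos, tendsto_natCast_atTop_atTop.eventually_gt_atTop a] with n hn han
  rw [hc n han, Function.comp_apply, ← mul_assoc, div_pow,
    div_mul_cancel₀ _ (pow_ne_zero k hn.ne')]

/-- `arcsin y - tan (arcsin y)`, by `Real.tan_arcsin`. -/
noncomputable def arcsinSubTan (y : ℝ) : ℝ := arcsin y - y / √(1 - y ^ 2)

theorem hasDerivAt_arcsinSubTan {y : ℝ} (hy : y ∈ Ioo (-1 : ℝ) 1) :
    HasDerivAt arcsinSubTan (-(y ^ 2) / √(1 - y ^ 2) ^ 3) y := by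
  have h1 : 0 < 1 - y ^ 2 := by nlinarith [hy.1, hy.2]
  have hs : 0 < √(1 - y ^ 2) := sqrt_pos.mpr h1
  have hsqrt : HasDerivAt (fun y : ℝ => √(1 - y ^ 2)) (-y / √(1 - y ^ 2)) y := by
    convert ((hasDerivAt_pow 2 y).const_sub 1).sqrt h1.ne' using 1
    simp [field]
  refine ((hasDerivAt_arcsin hy.1.ne' hy.2.ne).sub
    ((hasDerivAt_id y).div hsqrt hs.ne')).congr_deriv ?_
  rw [id_eq]
  field_simp
  ring

theorem tendsto_arcsinSubTan_div_cube :
    Tendsto (fun y => arcsinSubTan y / y ^ 3) (𝓝[>] 0) (𝓝 (-(1 / 3))) := by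
  have hIoo : Ioo (0 : ℝ) 1 ∈ 𝓝[>] (0 : ℝ) := Ioo_mem_nhdsGT one_pos
  have hcont : ContinuousAt arcsinSubTan 0 := by
    unfold arcsinSubTan
    fun_prop (disch := norm_num)
  have hratio : Tendsto (fun y : ℝ => -(1 / (3 * √(1 - y ^ 2) ^ 3))) (𝓝 0) (𝓝 (-(1 / 3))) := by
    have : ContinuousAt (fun y : ℝ => -(1 / (3 * √(1 - y ^ 2) ^ 3))) 0 := by
      fun_prop (disch := norm_num)
    simpa using this.tendsto
  refine HasDerivAt.lhopital_zero_nhdsGT (f' := fun y => -(y ^ 2) / √(1 - y ^ 2) ^ 3)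
    (g' := fun y => 3 * y ^ 2) ?_ ?_ ?_ ?_ ?_ ?_
  · filter_upwards [hIoo] with y hy using hasDerivAt_arcsinSubTan ⟨by linarith [hy.1], hy.2⟩
  · filter_upwards with y using by simpa using hasDerivAt_pow 3 y
  · filter_upwards [self_mem_nhdsWithin] with y (hy : 0 < y) using by positivity
  · simpa [arcsinSubTan] using hcont.tendsto.mono_left nhdsWithin_le_nhds
  · exact ((continuous_pow 3).tendsto' 0 0 (by norm_num)).mono_left nhdsWithin_le_nhds
  · refine (hratio.mono_left nhdsWithin_le_nhds).congr' ?_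
    filter_upwards [hIoo] with y hy
    have hy0 : y ≠ 0 := hy.1.ne'
    have : 0 < √(1 - y ^ 2) := sqrt_pos.mpr (by nlinarith [hy.1, hy.2])
    field_simp

theorem hasDerivAt_sqrt_mul_arcsin_inv_sqrt {x : ℝ} (hx : 1 < x) :
    HasDerivAt (fun x => √x * arcsin (1 / √x)) (arcsinSubTan (1 / √x) / (2 * √x)) x := by
  have hs1 : 1 < √x := by simpa using sqrt_lt_sqrt zero_le_one hx
  have hs0 : 0 < √x := one_pos.trans hs1
  have hsqrt := hasDerivAt_sqrt (one_pos.trans hx).ne'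
  have hinv := (hasDerivAt_const x (1 : ℝ)).div hsqrt hs0.ne'
  have harcsin := (hasDerivAt_arcsin (by linarith [one_div_pos.mpr hs0])
    ((div_lt_one hs0).mpr hs1).ne).comp x hinv
  refine (hsqrt.mul harcsin).congr_deriv ?_
  have : 0 < √(1 - (1 / √x) ^ 2) := sqrt_pos.mpr (by
    rw [one_div_pow, sub_pos, div_lt_one (by positivity)]; nlinarith)
  simp only [arcsinSubTan, Function.comp_apply, Pi.div_apply]
  field_simp
  ring

theorem tendsto_sq_mul_deriv_sqrt_mul_arcsin_inv_sqrt :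
    Tendsto (fun x : ℝ => x ^ 2 * (arcsinSubTan (1 / √x) / (2 * √x))) atTop (𝓝 (-(1 / 6))) := by
  have hy : Tendsto (fun x : ℝ => 1 / √x) atTop (𝓝[>] 0) := by
    simpa only [one_div, Function.comp_def] using
      tendsto_inv_atTop_nhdsGT_zero.comp tendsto_sqrt_atTop
  have hlim := (tendsto_arcsinSubTan_div_cube.comp hy).div_const 2
  rw [show -(1 / 3 : ℝ) / 2 = -(1 / 6) by norm_num] at hlim
  refine hlim.congr' ?_
  filter_upwards [eventually_gt_atTop 0] with x hx
  have hs : 0 < √x := sqrt_pos.mpr hx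
  have hx2 : x ^ 2 = √x ^ 4 := by rw [show 4 = 2 * 2 from rfl, pow_mul, sq_sqrt hx.le]
  rw [Function.comp_apply, hx2]
  field_simp

/-- With `r(n) = √(n+1)·arcsin(1/√(n+1)) − √n·arcsin(1/√n)`, one has
`r(n) ~ −(1/6) n⁻²`, i.e. `n² r(n) → −1/6` as `n → ∞`. -/
theorem median_increment_decay :
    Filter.Tendsto
      (fun n : ℕ => (n : ℝ) ^ 2 *
        (Real.sqrt (n + 1) * Real.arcsin (1 / Real.sqrt (n + 1))
          - Real.sqrt n * Real.arcsin (1 / Real.sqrt n)))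
      Filter.atTop (nhds (-(1 / 6))) :=
  tendsto_pow_mul_sub_of_tendsto_pow_mul_deriv 2
    (fun _ => hasDerivAt_sqrt_mul_arcsin_inv_sqrt)
    tendsto_sq_mul_deriv_sqrt_mul_arcsin_inv_sqrt
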